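/- arXiv:1610.00296 — 3 statements merged into one kernel-verified Lean document; each statement's English description precedes it below -/
import Mathlib

section
/- Let f_l, f_u, D_u, D_l be real numbers with f_l < 0 < f_u, D_u > 0 and D_l < 0. Then min((f_u − f_l)/D_u, (f_l − f_u)/D_l) ≤ (1 + max(|f_l|/f_u, f_u/|f_l|)) · min(f_u/D_u, f_l/D_l). -/
/-! Both ring quantities factor through the chain quantities:
`(f_u - f_l)/D_u = (1 + |f_l|/f_u) · f_u/D_u` and `(f_l - f_u)/D_l = (1 + f_u/|f_l|) · f_l/D_l`.
Since both chain quantities are positive, the minimum of the two products is at most the larger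
factor times the smaller chain quantity. -/

theorem sub_div_eq_one_sub_div_mul_div {K : Type*} [DivisionRing K] {a : K} (b c : K)
    (ha : a ≠ 0) : (a - b) / c = (1 - b / a) * (a / c) := by
  rw [one_sub_div ha, div_mul_div_cancel₀ ha]

theorem min_mul_le_max_mul_min {α : Type*} [Semiring α] [LinearOrder α] [IsOrderedRing α]
    (a b : α) {x y : α} (hx : 0 ≤ x) (hy : 0 ≤ y) :
    min (a * x) (b * y) ≤ max a b * min x y := by
  rcases le_total x y with hxy | hyx
  · rw [min_eq_left hxy]
    exact (min_le_left _ _).trans (mul_le_mul_of_nonneg_right (le_max_left a b) hx)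
  · rw [min_eq_right hyx]
    exact (min_le_right _ _).trans (mul_le_mul_of_nonneg_right (le_max_right a b) hy)

/-- The arithmetic inequality behind the bound `Γ_R/Γ_C ≤ 1 + max(|f_l/f_u|, |f_u/f_l|)`:
for `f_l < 0 < f_u`, `D_u > 0` and `D_l < 0`,
`min((f_u-f_l)/D_u, (f_l-f_u)/D_l) ≤ (1 + max(|f_l|/f_u, f_u/|f_l|)) · min(f_u/D_u, f_l/D_l)`. -/
theorem ratio_upper_bound_arith (fl fu Du Dl : ℝ)
    (hfl : fl < 0) (hfu : 0 < fu) (hDu : 0 < Du) (hDl : Dl < 0) :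
    min ((fu - fl) / Du) ((fl - fu) / Dl) ≤
      (1 + max (|fl| / fu) (fu / |fl|)) * min (fu / Du) (fl / Dl) := by
  have hupper : (fu - fl) / Du = (1 + |fl| / fu) * (fu / Du) := by
    rw [abs_of_neg hfl, neg_div, ← sub_eq_add_neg, sub_div_eq_one_sub_div_mul_div _ _ hfu.ne']
  have hlower : (fl - fu) / Dl = (1 + fu / |fl|) * (fl / Dl) := by
    rw [abs_of_neg hfl, div_neg, ← sub_eq_add_neg, sub_div_eq_one_sub_div_mul_div _ _ hfl.ne]
  rw [hupper, hlower, ← max_add_add_left]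
  exact min_mul_le_max_mul_min _ _ (div_pos hfu hDu).le (div_pos_of_neg_of_neg hfl hDl).le
end

section
/- There exist φ_1, φ_2, φ_3 ∈ ℝ with sin(φ_1) = 1, sin(φ_2) = −1, sin(φ_3) = −1 (namely φ = (π/2, −π/2, −π/2)), but there exist no real numbers ψ_1, ψ_2, ψ_3 satisfying simultaneously sin(ψ_1) + sin(ψ_1 + ψ_2 + ψ_3) = 1, sin(ψ_2) + sin(ψ_1 + ψ_2 + ψ_3) = −1, and sin(ψ_3) + sin(ψ_1 + ψ_2 + ψ_3) = −1. Hence for N = 4 oscillators with sine coupling and partial-sum vector D = (1, −1, −1) at width Γ = 1, the chain has a phase-locked state while the matched ring has none, so the chain locking threshold can exceed the ring locking threshold. -/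
open Real

lemma cos_eq_zero_of_sin_eq_one {x : ℝ} (h : Real.sin x = 1) : Real.cos x = 0 := by
  have := Real.sin_sq_add_cos_sq x
  nlinarith [Real.cos_sq_le_one x]

lemma cos_eq_zero_of_sin_eq_neg_one {x : ℝ} (h : Real.sin x = -1) : Real.cos x = 0 := by
  have := Real.sin_sq_add_cos_sq x
  nlinarith [Real.cos_sq_le_one x]

/-- Counterexample to `Γ_C ≤ Γ_R`. For `N = 4`, sine coupling,
`D = (1, -1, -1)` and `Γ = 1`: the chain equations `sin φ_1 = 1`, `sin φ_2 = -1`,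
`sin φ_3 = -1` have a solution, but the ring equations
`sin ψ_k + sin(ψ_1 + ψ_2 + ψ_3) = D_k` have none. -/
theorem chain_locks_but_ring_does_not :
    (∃ φ1 φ2 φ3 : ℝ, Real.sin φ1 = 1 ∧ Real.sin φ2 = -1 ∧ Real.sin φ3 = -1) ∧
    ¬ ∃ ψ1 ψ2 ψ3 : ℝ,
        Real.sin ψ1 + Real.sin (ψ1 + ψ2 + ψ3) = 1 ∧
        Real.sin ψ2 + Real.sin (ψ1 + ψ2 + ψ3) = -1 ∧
        Real.sin ψ3 + Real.sin (ψ1 + ψ2 + ψ3) = -1 := by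
  constructor
  · exact ⟨π/2, -(π/2), -(π/2), by simp, by simp, by simp⟩
  · rintro ⟨a, b, c, h1, h2, h3⟩
    -- sin(a+b+c) must be 0
    have hs : Real.sin (a + b + c) = 0 := by
      have b1 := Real.sin_le_one a
      have b2 := Real.neg_one_le_sin b
      linarith
    have ha : Real.sin a = 1 := by linarith
    have hb : Real.sin b = -1 := by linarith
    have hc : Real.sin c = -1 := by linarith
    have hca := cos_eq_zero_of_sin_eq_one ha
    have hcb := cos_eq_zero_of_sin_eq_neg_one hb
    have hcc := cos_eq_zero_of_sin_eq_neg_one hc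
    have : Real.sin (a + b + c) = -1 := by
      rw [Real.sin_add, Real.sin_add, Real.cos_add]
      rw [ha, hb, hc, hca, hcb, hcc]; ring
    linarith
end

section
/- Let f : ℝ → ℝ be continuously differentiable and 2π-periodic, let M ≥ 0 satisfy |f′(x)| ≤ M for all x, and let x_0 ∈ ℝ satisfy f(x_0) = 0. Let N ≥ 2, Γ ∈ ℝ, D : Fin (N−1) → ℝ, and let φ^C : Fin (N−1) → ℝ satisfy f(φ^C_k) = Γ·D_k for all k. Let S = ∑_{j=1}^{N−1} φ^C_j, let Ψ = S − 2π·⌊S/(2π)⌋ (so Ψ ∈ [0, 2π) and Ψ ≡ S mod 2π), and define φ^R_k = φ^C_k − (x_0 + Ψ)/(N−1). Then f(−∑_{j=1}^{N−1} φ^R_j) = 0, and for every k, |f(φ^R_k) − f(−∑_{j=1}^{N−1} φ^R_j) − Γ·D_k| ≤ M·|x_0 + Ψ|/(N−1). In particular, a chain locked state yields an approximate ring locked state whose residual is O(1/N). -/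
/-! The chain sum `S` and the shifted sum `∑ φR = S - (x0 + Ψ)` differ from `-x0` only by a
multiple of `2π`, so periodicity makes the ring boundary term `f x0 = 0`. Each phase moves by
`(x0 + Ψ)/(N - 1)`, and the mean value inequality bounds the change of `f (φ_k)` by `M` times
that shift. -/

theorem abs_sub_le_of_abs_deriv_le {f : ℝ → ℝ} (hf : Differentiable ℝ f) {M : ℝ}
    (hM : ∀ x, |deriv f x| ≤ M) (x y : ℝ) : |f x - f y| ≤ M * |x - y| := by
  simpa only [Real.norm_eq_abs] using
    convex_univ.norm_image_sub_le_of_norm_deriv_le (fun z _ => (hf z)) (fun z _ => hM z)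
      (Set.mem_univ y) (Set.mem_univ x)

theorem Fin.sum_sub_div_card {n : ℕ} (hn : n ≠ 0) (a : Fin n → ℝ) (c : ℝ) :
    ∑ j, (a j - c / n) = ∑ j, a j - c := by
  rw [Finset.sum_sub_distrib, Finset.sum_const, Finset.card_univ, Fintype.card_fin,
    nsmul_eq_mul, mul_div_cancel₀ _ (Nat.cast_ne_zero.mpr hn)]

theorem chain_gives_approximate_ring_telescopic_general (f : ℝ → ℝ) (hf : ContDiff ℝ 1 f)
    (hper : Function.Periodic f (2 * Real.pi))
    (M : ℝ) (hM' : ∀ x, |deriv f x| ≤ M)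
    (x0 : ℝ) (hx0 : f x0 = 0)
    (N : ℕ) (hN : 2 ≤ N) (Γ : ℝ) (D : Fin (N - 1) → ℝ)
    (φC : Fin (N - 1) → ℝ) (hφC : ∀ k, f (φC k) = Γ * D k)
    (S Ψ : ℝ) (hS : S = ∑ j, φC j)
    (hΨ : Ψ = S - 2 * Real.pi * (⌊S / (2 * Real.pi)⌋ : ℤ))
    (φR : Fin (N - 1) → ℝ) (hφR : ∀ k, φR k = φC k - (x0 + Ψ) / ((N : ℝ) - 1)) :
    f (-∑ j, φR j) = 0 ∧
    ∀ k, |f (φR k) - f (-∑ j, φR j) - Γ * D k| ≤ M * |x0 + Ψ| / ((N : ℝ) - 1) := by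
  have hcard : ((N - 1 : ℕ) : ℝ) = (N : ℝ) - 1 := by
    rw [Nat.cast_sub (by omega), Nat.cast_one]
  have hpos : (0 : ℝ) < (N : ℝ) - 1 := by
    rw [← hcard]; exact_mod_cast (by omega : 0 < N - 1)
  have hsum : ∑ j, φR j = S - (x0 + Ψ) := by
    simp only [hφR, ← hcard]
    rw [Fin.sum_sub_div_card (by omega), hS]
  have hring : f (-∑ j, φR j) = 0 := by
    rw [hsum, show -(S - (x0 + Ψ)) = x0 - ⌊S / (2 * Real.pi)⌋ * (2 * Real.pi) by rw [hΨ]; ring,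
      hper.sub_int_mul_eq, hx0]
  refine ⟨hring, fun k => ?_⟩
  rw [hring, sub_zero, ← hφC k]
  calc |f (φR k) - f (φC k)|
      ≤ M * |φR k - φC k| := abs_sub_le_of_abs_deriv_le (hf.differentiable one_ne_zero) hM' _ _
    _ = M * |x0 + Ψ| / ((N : ℝ) - 1) := by
      rw [hφR k, sub_sub_cancel_left, abs_neg, abs_div, abs_of_pos hpos, mul_div_assoc]

/-- From a chain locked state with telescopic coupling, the shifted phases
`φ^R_k = φ^C_k - (x_0 + Ψ)/(N-1)` give an approximate ring locked state: the ring boundary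
term vanishes, `f(-∑_j φ^R_j) = 0`, and each residual
`|f(φ^R_k) - f(-∑_j φ^R_j) - Γ·D_k|` is at most `M·|x_0 + Ψ|/(N-1)`, i.e. `O(1/N)`. -/
theorem chain_gives_approximate_ring_telescopic (f : ℝ → ℝ) (hf : ContDiff ℝ 1 f)
    (hper : Function.Periodic f (2 * Real.pi))
    (M : ℝ) (hM : 0 ≤ M) (hM' : ∀ x, |deriv f x| ≤ M)
    (x0 : ℝ) (hx0 : f x0 = 0)
    (N : ℕ) (hN : 2 ≤ N) (Γ : ℝ) (D : Fin (N - 1) → ℝ)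
    (φC : Fin (N - 1) → ℝ) (hφC : ∀ k, f (φC k) = Γ * D k)
    (S Ψ : ℝ) (hS : S = ∑ j, φC j)
    (hΨ : Ψ = S - 2 * Real.pi * (⌊S / (2 * Real.pi)⌋ : ℤ))
    (φR : Fin (N - 1) → ℝ) (hφR : ∀ k, φR k = φC k - (x0 + Ψ) / ((N : ℝ) - 1)) :
    f (-∑ j, φR j) = 0 ∧
    ∀ k, |f (φR k) - f (-∑ j, φR j) - Γ * D k| ≤ M * |x0 + Ψ| / ((N : ℝ) - 1) :=
  chain_gives_approximate_ring_telescopic_general f hf hper M hM' x0 hx0 N hN Γ D φC hφC S Ψ hS hΨ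
    φR hφR
end
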